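/- Assume 0 < ε ≤ 1/2 and C > 0, and set M = 1 + (4(2 + ε)/ε²)(C + log 8). Let R_1, …, R_d be independent random variables, each distributed according to the geometric distribution Geom(1/2) on the nonnegative integers, and define S_i = |{j ∈ {1,…,d} : R_j ≥ i}|. Let ℓ ≥ 0 be an integer such that M·2^{ℓ−1} ≤ d < M·2^{ℓ}. Then P(S_{ℓ+1} > M) < (1/8)·e^{−C}. -/

import Mathlib

open MeasureTheory ProbabilityTheory

/-- `Scnt R i` is the number of indices `j` with `R j ≥ i` (an integer index
`i ≤ 0` is satisfied by every entry). -/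
def Scnt {d : ℕ} (R : Fin d → ℕ) (i : ℤ) : ℕ :=
  (Finset.univ.filter fun j : Fin d => i ≤ (R j : ℤ)).card

/-- `Tcnt R i` is the number of indices `j` other than the first one with
`R j ≥ i`. -/
def Tcnt {d : ℕ} (R : Fin d → ℕ) (i : ℤ) : ℕ :=
  (Finset.univ.filter fun j : Fin d => i ≤ (R j : ℤ) ∧ 0 < (j : ℕ)).card

/-!
Each `R j ≥ ℓ + 1` with probability `2^{-(ℓ+1)}`, so `S_{ℓ+1}` is a sum of `d` independent
Bernoulli indicators with mean `d 2^{-(ℓ+1)} < M / 2`. The Chernoff bound at `t = log 2`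
gives `P(S_{ℓ+1} ≥ M) ≤ exp (-(log 2 - 1/2) M)`, and `(log 2 - 1/2) M > C + log 8` because
`4 (2 + ε) / ε² ≥ 32` for `ε ≤ 1/2`.
-/

open Real

lemma exp_mul_indicator_one {Ω : Type*} (s : Set Ω) (t : ℝ) :
    (fun ω => exp (t * s.indicator 1 ω)) = fun ω => 1 + s.indicator (fun _ => exp t - 1) ω := by
  funext ω
  by_cases h : ω ∈ s <;> simp [h]

section Probability

variable {Ω ι : Type*} [MeasurableSpace Ω] {μ : Measure Ω}

lemma measure_setOf_le_eq_inv_two_pow {X : Ω → ℕ} (hX : Measurable X)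
    (hgeom : ∀ i : ℕ, μ {ω | X ω = i} = 2⁻¹ ^ (i + 1)) (k : ℕ) :
    μ {ω | k ≤ X ω} = 2⁻¹ ^ k := by
  have hunion : {ω | k ≤ X ω} = ⋃ i : ℕ, {ω | X ω = k + i} := by
    ext ω
    simp only [Set.mem_ofPred_eq, Set.mem_iUnion]
    exact ⟨fun h => ⟨X ω - k, by omega⟩, fun ⟨i, hi⟩ => by omega⟩
  have hdisj : Pairwise (Function.onFun Disjoint fun i : ℕ => {ω | X ω = k + i}) :=
    fun i j hij => Set.disjoint_left.mpr fun ω hi hj => hij (by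
      simp only [Set.mem_ofPred_eq] at hi hj; omega)
  rw [hunion, measure_iUnion hdisj fun i => hX (measurableSet_singleton _)]
  simp_rw [hgeom, add_assoc, pow_add _ k, ENNReal.tsum_mul_left, ENNReal.tsum_geometric_add_one,
    ENNReal.one_sub_inv_two, inv_inv, ENNReal.inv_mul_cancel two_ne_zero ENNReal.ofNat_ne_top,
    mul_one]

lemma integrable_exp_mul_indicator_one [IsFiniteMeasure μ] {s : Set Ω} (hs : MeasurableSet s)
    (t : ℝ) :
    Integrable (fun ω => exp (t * s.indicator 1 ω)) μ := by
  rw [exp_mul_indicator_one]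
  exact (integrable_const 1).add ((integrable_const _).indicator hs)

lemma mgf_indicator_one [IsProbabilityMeasure μ] {s : Set Ω} (hs : MeasurableSet s) (t : ℝ) :
    mgf (s.indicator 1) μ t = 1 + (exp t - 1) * μ.real s := by
  rw [mgf, exp_mul_indicator_one, integral_add (integrable_const 1)
    ((integrable_const _).indicator hs), integral_indicator_const _ hs]
  simp [mul_comm]

theorem measure_sum_indicator_ge_le [IsProbabilityMeasure μ] [Fintype ι] {A : ι → Set Ω}
    (hA : ∀ j, MeasurableSet (A j)) (hindep : iIndepFun (fun j => (A j).indicator (1 : Ω → ℝ)) μ) (a : ℝ) {t : ℝ} (ht : 0 ≤ t) :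
    μ.real {ω | a ≤ ∑ j, (A j).indicator 1 ω} ≤
      exp (-t * a + (exp t - 1) * ∑ j, μ.real (A j)) := by
  have hmeas j : Measurable ((A j).indicator (1 : Ω → ℝ)) := measurable_one.indicator (hA j)
  have hint : Integrable (fun ω => exp (t * (∑ j, (A j).indicator (1 : Ω → ℝ)) ω)) μ :=
    hindep.integrable_exp_mul_sum hmeas fun j _ => integrable_exp_mul_indicator_one (hA j) t
  calc μ.real {ω | a ≤ ∑ j, (A j).indicator 1 ω}
      ≤ exp (-t * a) * mgf (∑ j, (A j).indicator 1) μ t := by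
        simpa only [Finset.sum_apply] using measure_ge_le_exp_mul_mgf a ht hint
    _ = exp (-t * a) * ∏ j, (1 + (exp t - 1) * μ.real (A j)) := by
        simp only [hindep.mgf_sum hmeas, mgf_indicator_one (hA _)]
    _ ≤ exp (-t * a) * ∏ j, exp ((exp t - 1) * μ.real (A j)) := by
        gcongr with j
        · intro j _
          have : 0 ≤ exp t - 1 := by linarith [one_le_exp ht]
          positivity
        · linarith [add_one_le_exp ((exp t - 1) * μ.real (A j))]
    _ = exp (-t * a + (exp t - 1) * ∑ j, μ.real (A j)) := by
        rw [← exp_sum, ← exp_add, Finset.mul_sum]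

end Probability

lemma Scnt_natCast_eq_sum_indicator {Ω : Type*} {d : ℕ} (R : Fin d → Ω → ℕ) (k : ℕ) (ω : Ω) :
    (Scnt (fun j => R j ω) k : ℝ) = ∑ j, {ω | k ≤ R j ω}.indicator 1 ω := by
  rw [Scnt, Finset.card_filter]
  push_cast
  refine Finset.sum_congr rfl fun j _ => ?_
  by_cases h : k ≤ R j ω <;> simp [h]

lemma lt_log_two_sub_half_mul {ε L : ℝ} (hε : 0 < ε) (hε' : ε ≤ 1 / 2) (hL : 0 < L) :
    L < (log 2 - 1 / 2) * (1 + 4 * (2 + ε) / ε ^ 2 * L) := by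
  have h32 : 32 ≤ 4 * (2 + ε) / ε ^ 2 := by
    rw [le_div_iff₀ (by positivity)]
    nlinarith
  have hlog2 : 0.69 < log 2 := lt_trans (by norm_num) log_two_gt_d9
  nlinarith [mul_le_mul_of_nonneg_right h32 hL.le]

theorem Scount_high_tail_bound_general {Ω : Type*} [MeasureSpace Ω]
    [IsProbabilityMeasure (ℙ : Measure Ω)]
    (ε C : ℝ) (hε : 0 < ε) (hε' : ε ≤ 1 / 2) (hC : 0 < C)
    (M : ℝ) (hM : M = 1 + 4 * (2 + ε) / ε ^ 2 * (C + Real.log 8))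
    (d : ℕ) (R : Fin d → Ω → ℕ)
    (hmeas : ∀ j, Measurable (R j))
    (hindep : iIndepFun R ℙ)
    (hgeom : ∀ j (i : ℕ), ℙ {ω | R j ω = i} = (2 : ENNReal)⁻¹ ^ (i + 1))
    (ℓ : ℤ) (hℓ : 0 ≤ ℓ)
    (hℓ₂ : (d : ℝ) < M * 2 ^ ℓ)  :
    ℙ {ω | M < (Scnt (fun j => R j ω) (ℓ + 1) : ℝ)} <
      ENNReal.ofReal (1 / 8 * Real.exp (-C)) := by
  lift ℓ to ℕ using hℓ
  set A : Fin d → Set Ω := fun j => {ω | ℓ + 1 ≤ R j ω}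
  have hA j : MeasurableSet (A j) := hmeas j measurableSet_Ici
  have hindepA : iIndepFun (fun j => (A j).indicator (1 : Ω → ℝ)) ℙ :=
    hindep.comp (fun _ => {k | ℓ + 1 ≤ k}.indicator 1) fun _ => measurable_from_top
  have hprob j : volume.real (A j) = (2⁻¹ : ℝ) ^ (ℓ + 1) := by
    simp only [A, measureReal_def, measure_setOf_le_eq_inv_two_pow (hmeas j) (hgeom j),
      ENNReal.toReal_pow, ENNReal.toReal_inv, ENNReal.toReal_ofNat]
  have hmean : (d : ℝ) * 2⁻¹ ^ (ℓ + 1) < M / 2 := by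
    rw [zpow_natCast] at hℓ₂
    rw [inv_pow, ← div_eq_mul_inv, div_lt_div_iff₀ (by positivity) two_pos, pow_succ, ← mul_assoc]
    linarith
  have hexponent : C + log 8 < (log 2 - 1 / 2) * M :=
    hM ▸ lt_log_two_sub_half_mul hε hε' (by linarith [log_pos (by norm_num : (1 : ℝ) < 8)])
  calc ℙ {ω | M < (Scnt (fun j => R j ω) (ℓ + 1) : ℝ)}
      ≤ ℙ {ω | M ≤ ∑ j, (A j).indicator 1 ω} := by
        refine measure_mono fun ω hω => ?_
        simp only [Set.mem_ofPred_eq] at hω ⊢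
        exact_mod_cast (Scnt_natCast_eq_sum_indicator R (ℓ + 1) ω ▸ hω).le
    _ = ENNReal.ofReal (volume.real {ω | M ≤ ∑ j, (A j).indicator 1 ω}) :=
        (ofReal_measureReal (measure_ne_top _ _)).symm
    _ ≤ ENNReal.ofReal (exp (-log 2 * M + (exp (log 2) - 1) * ∑ j, volume.real (A j))) :=
        ENNReal.ofReal_le_ofReal (measure_sum_indicator_ge_le hA hindepA M (log_pos one_lt_two).le)
    _ < ENNReal.ofReal (exp (-(C + log 8))) := by
        rw [ENNReal.ofReal_lt_ofReal_iff (exp_pos _), exp_lt_exp, exp_log two_pos]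
        simp only [hprob, Finset.sum_const, Finset.card_univ, Fintype.card_fin, nsmul_eq_mul]
        linarith
    _ = ENNReal.ofReal (1 / 8 * exp (-C)) := by
        rw [neg_add, exp_add, exp_neg (log 8), exp_log (by norm_num), mul_comm, one_div]

theorem Scount_high_tail_bound {Ω : Type*} [MeasureSpace Ω]
    [IsProbabilityMeasure (ℙ : Measure Ω)]
    (ε C : ℝ) (hε : 0 < ε) (hε' : ε ≤ 1 / 2) (hC : 0 < C)
    (M : ℝ) (hM : M = 1 + 4 * (2 + ε) / ε ^ 2 * (C + Real.log 8))
    (d : ℕ) (R : Fin d → Ω → ℕ)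
    (hmeas : ∀ j, Measurable (R j))
    (hindep : iIndepFun R ℙ)
    (hgeom : ∀ j (i : ℕ), ℙ {ω | R j ω = i} = (2 : ENNReal)⁻¹ ^ (i + 1))
    (ℓ : ℤ) (hℓ : 0 ≤ ℓ)
    (hℓ₁ : M * 2 ^ (ℓ - 1) ≤ (d : ℝ)) (hℓ₂ : (d : ℝ) < M * 2 ^ ℓ)  :
    ℙ {ω | M < (Scnt (fun j => R j ω) (ℓ + 1) : ℝ)} <
      ENNReal.ofReal (1 / 8 * Real.exp (-C)) :=
  Scount_high_tail_bound_general ε C hε hε' hC M hM d R hmeas hindep hgeom ℓ hℓ hℓ₂
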